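/- arXiv:1909.09813 — 2 statements merged into one kernel-verified Lean document; each statement's English description precedes it below -/
import Mathlib

section
/- Positivity of the first-order moving-mesh finite volume scheme with Rusanov flux (Theorem 1 of the paper): Let γ > 1 and β ∈ (0,1). Let (ρ_{j−1}, v_{j−1}, p_{j−1}), (ρ_j, v_j, p_j), (ρ_{j+1}, v_{j+1}, p_{j+1}) be primitive states with positive densities and positive pressures, with conserved vectors U_{j−1}, U_j, U_{j+1} and sound speeds c_{j−1}, c_j, c_{j+1}. Let w⁻, w⁺ ∈ ℝ be face velocities, let λ⁻ = max(|v_{j−1}−w⁻|+c_{j−1}, |v_j−w⁻|+c_j) and λ⁺ = max(|v_j−w⁺|+c_j, |v_{j+1}−w⁺|+c_{j+1}), and let ĝ⁻ = ĝ(U_{j−1},U_j,w⁻), ĝ⁺ = ĝ(U_j,U_{j+1},w⁺) be the Rusanov numerical fluxes. Let h > 0 and Δt > 0 satisfy Δt ≤ (1 − β/2)·h / (½(λ⁻ + λ⁺)) and Δt·|w⁺ − w⁻| ≤ β·h. Set h' = h + Δt(w⁺ − w⁻) and (ρ', m', E') = U' = (h·U_j − Δt(ĝ⁺ − ĝ⁻))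 / h'. Then h' > 0, ρ' > 0 and (γ−1)(E' − m'²/(2ρ')) > 0, i.e. the updated cell average has positive density and positive pressure. -/
noncomputable section

/-- Conserved vector `U = (ρ, ρv, E)` of a primitive state `(ρ, v, p)`,
with `E = p/(γ-1) + ρ v²/2`. -/
def consU (γ ρ v p : ℝ) : ℝ × ℝ × ℝ := (ρ, ρ * v, p / (γ - 1) + ρ * v ^ 2 / 2)

/-- Euler flux `F(U) = (ρv, p + ρv², (E+p)v)`. -/
def eulerFlux (γ ρ v p : ℝ) : ℝ × ℝ × ℝ :=
  (ρ * v, p + ρ * v ^ 2, (p / (γ - 1) + ρ * v ^ 2 / 2 + p) * v)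

/-- ALE flux `g(U,w) = F(U) − w U`. -/
def aleFlux (γ ρ v p w : ℝ) : ℝ × ℝ × ℝ := eulerFlux γ ρ v p - w • consU γ ρ v p

/-- Sound speed `c = √(γ p / ρ)`. -/
def soundSpeed (γ ρ p : ℝ) : ℝ := Real.sqrt (γ * p / ρ)

/-- Rusanov wave speed `λ = max(|v_l − w| + c_l, |v_r − w| + c_r)`. -/
def rusanovSpeed (vl cl vr cr w : ℝ) : ℝ := max (|vl - w| + cl) (|vr - w| + cr)

/-- Rusanov numerical flux `ĝ(U_l, U_r, w) = ½(g(U_l,w) + g(U_r,w)) − ½ λ (U_r − U_l)`. -/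
def rusanovFlux (γ ρl vl pl ρr vr pr w : ℝ) : ℝ × ℝ × ℝ :=
  (1 / 2 : ℝ) • (aleFlux γ ρl vl pl w + aleFlux γ ρr vr pr w) -
    (rusanovSpeed vl (soundSpeed γ ρl pl) vr (soundSpeed γ ρr pr) w / 2) •
      (consU γ ρr vr pr - consU γ ρl vl pl)

/-- Pressure `(γ−1)(E − m²/(2ρ))` of a conserved vector `(ρ, m, E)`. -/
def pressureOf (γ : ℝ) (u : ℝ × ℝ × ℝ) : ℝ := (γ - 1) * (u.2.2 - u.2.1 ^ 2 / (2 * u.1))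

/-!
The admissible states `{ρ > 0, E - m²/(2ρ) > 0}` form a convex cone, since the kinetic energy
`m²/(2ρ)` is jointly convex and positively homogeneous. The Rusanov update splits as
`h U_j - Δt (ĝ⁺ - ĝ⁻) = α U_j + (Δt/2) ((λ⁻ U_{j-1} + g(U_{j-1}, w⁻)) + (λ⁺ U_{j+1} - g(U_{j+1}, w⁺)))`
with `α = h + Δt (w⁺ - w⁻)/2 - Δt (λ⁻ + λ⁺)/2`, which the two CFL conditions make nonnegative.
Since `g(U, w) = (v - w) U + (0, p, p v)`, each bracket is `s U ± (0, p, p v)` with `s ≥ c`,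
and such a state has internal energy `s p/(γ-1) - p²/(2 s ρ) > 0` because `ρ s² ≥ γ p`.
-/

def internalEnergy (u : ℝ × ℝ × ℝ) : ℝ := u.2.2 - u.2.1 ^ 2 / (2 * u.1)

theorem kineticEnergy_add_le {m n ρ σ : ℝ} (hρ : 0 < ρ) (hσ : 0 < σ) :
    (m + n) ^ 2 / (2 * (ρ + σ)) ≤ m ^ 2 / (2 * ρ) + n ^ 2 / (2 * σ) := by
  rw [div_add_div _ _ (by positivity) (by positivity),
    div_le_div_iff₀ (by positivity) (by positivity)]
  nlinarith [sq_nonneg (m * σ - n * ρ), mul_pos hρ hσ]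

theorem internalEnergy_smul (a : ℝ) (u : ℝ × ℝ × ℝ) :
    internalEnergy (a • u) = a * internalEnergy u := by
  rcases eq_or_ne a 0 with rfl | ha
  · simp [internalEnergy]
  simp only [internalEnergy, Prod.smul_fst, Prod.smul_snd, smul_eq_mul]
  rw [mul_pow, sq a, mul_left_comm 2 a, mul_assoc a a, mul_div_mul_left _ _ ha, mul_div_assoc]
  ring

def admissibleCone : ConvexCone ℝ (ℝ × ℝ × ℝ) where
  carrier := {u | 0 < u.1 ∧ 0 < internalEnergy u}
  smul_mem' a ha u hu := by
    refine ⟨by simpa using mul_pos ha hu.1, ?_⟩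
    rw [internalEnergy_smul]
    exact mul_pos ha hu.2
  add_mem' u hu v hv := by
    refine ⟨by simpa using add_pos hu.1 hv.1, ?_⟩
    have := kineticEnergy_add_le (m := u.2.1) (n := v.2.1) hu.1 hv.1
    simp only [internalEnergy, Prod.fst_add, Prod.snd_add] at hu hv ⊢
    linarith [hu.2, hv.2]

theorem smul_add_mem_admissibleCone {a : ℝ} {u v : ℝ × ℝ × ℝ} (ha : 0 ≤ a)
    (hu : u ∈ admissibleCone) (hv : v ∈ admissibleCone) : a • u + v ∈ admissibleCone := by
  rcases ha.eq_or_lt with rfl | ha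
  · simpa using hv
  · exact admissibleCone.add_mem (admissibleCone.smul_mem ha hu) hv

section Euler

variable {γ ρ v p : ℝ}

theorem soundSpeed_pos (hγ : 1 < γ) (hρ : 0 < ρ) (hp : 0 < p) : 0 < soundSpeed γ ρ p :=
  Real.sqrt_pos.mpr (by positivity)

theorem gamma_mul_le_of_soundSpeed_le {s : ℝ} (hρ : 0 < ρ) (hs : soundSpeed γ ρ p ≤ s) :
    γ * p ≤ ρ * s ^ 2 := by
  have := (Real.sqrt_le_iff.mp hs).2
  rwa [div_le_iff₀ hρ, mul_comm (s ^ 2)] at this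

theorem internalEnergy_consU : internalEnergy (consU γ ρ v p) = p / (γ - 1) := by
  rcases eq_or_ne ρ 0 with rfl | hρ
  · simp [internalEnergy, consU]
  simp only [internalEnergy, consU]
  field_simp
  ring

theorem consU_mem_admissibleCone (hγ : 1 < γ) (hρ : 0 < ρ) (hp : 0 < p) :
    consU γ ρ v p ∈ admissibleCone := by
  refine ⟨hρ, ?_⟩
  rw [internalEnergy_consU]
  exact div_pos hp (sub_pos.mpr hγ)

theorem aleFlux_eq (w : ℝ) : aleFlux γ ρ v p w = (v - w) • consU γ ρ v p + (0, p, p * v) := by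
  simp only [aleFlux, eulerFlux, consU, Prod.smul_mk, Prod.mk_add_mk, Prod.mk_sub_mk, smul_eq_mul,
    Prod.mk.injEq]
  refine ⟨by ring, by ring, by ring⟩

theorem internalEnergy_smul_consU_add {s ε : ℝ} (hρ : ρ ≠ 0) (hs : s ≠ 0) :
    internalEnergy (s • consU γ ρ v p + ε • (0, p, p * v)) =
      s * (p / (γ - 1)) - ε ^ 2 * p ^ 2 / (2 * s * ρ) := by
  simp only [internalEnergy, consU, Prod.smul_mk, Prod.mk_add_mk, smul_eq_mul]
  field_simp
  ring

theorem smul_consU_add_mem_admissibleCone {s ε : ℝ} (hγ : 1 < γ) (hρ : 0 < ρ) (hp : 0 < p)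
    (hs : soundSpeed γ ρ p ≤ s) (hε : |ε| ≤ 1) :
    s • consU γ ρ v p + ε • (0, p, p * v) ∈ admissibleCone := by
  have hs0 : 0 < s := (soundSpeed_pos hγ hρ hp).trans_le hs
  have hγ1 : 0 < γ - 1 := sub_pos.mpr hγ
  refine ⟨by simpa [consU] using mul_pos hs0 hρ, ?_⟩
  rw [internalEnergy_smul_consU_add hρ.ne' hs0.ne', sub_pos, div_lt_iff₀ (by positivity)]
  have hε2 : ε ^ 2 ≤ 1 := by simpa using sq_le_sq' (abs_le.mp hε).1 (abs_le.mp hε).2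
  calc ε ^ 2 * p ^ 2 ≤ p ^ 2 := mul_le_of_le_one_left (by positivity) hε2
    _ < 2 * (γ * p) * (p / (γ - 1)) := by
      rw [← mul_div_assoc, lt_div_iff₀ hγ1]; nlinarith [sq_pos_of_pos hp]
    _ ≤ 2 * (ρ * s ^ 2) * (p / (γ - 1)) := by
      gcongr 2 * ?_ * _
      exact gamma_mul_le_of_soundSpeed_le hρ hs
    _ = s * (p / (γ - 1)) * (2 * s * ρ) := by ring

theorem smul_consU_add_aleFlux_mem_admissibleCone {lam w : ℝ} (hγ : 1 < γ) (hρ : 0 < ρ)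
    (hp : 0 < p) (hlam : |v - w| + soundSpeed γ ρ p ≤ lam) :
    lam • consU γ ρ v p + aleFlux γ ρ v p w ∈ admissibleCone := by
  have h := smul_consU_add_mem_admissibleCone (v := v) (s := lam + (v - w)) (ε := 1) hγ hρ hp
    (by linarith [neg_abs_le (v - w)]) (by norm_num)
  rwa [one_smul, add_smul, add_assoc, ← aleFlux_eq] at h

theorem smul_consU_sub_aleFlux_mem_admissibleCone {lam w : ℝ} (hγ : 1 < γ) (hρ : 0 < ρ)
    (hp : 0 < p) (hlam : |v - w| + soundSpeed γ ρ p ≤ lam) :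
    lam • consU γ ρ v p - aleFlux γ ρ v p w ∈ admissibleCone := by
  have h := smul_consU_add_mem_admissibleCone (v := v) (s := lam - (v - w)) (ε := -1) hγ hρ hp
    (by linarith [le_abs_self (v - w)]) (by norm_num)
  rwa [neg_one_smul, sub_smul, ← sub_eq_add_neg, sub_sub, ← aleFlux_eq] at h

theorem aleFlux_sub_aleFlux (w w' : ℝ) :
    aleFlux γ ρ v p w' = aleFlux γ ρ v p w - (w' - w) • consU γ ρ v p := by
  simp only [aleFlux, sub_smul]
  abel

end Euler

theorem conservative_update_eq {M : Type*} [AddCommGroup M] [Module ℝ M]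
    (U₀ U₁ U₂ g₀ g₁ g₁' g₂ : M) (lamM lamP wm wp h Δt : ℝ) (hg₁ : g₁' = g₁ - (wp - wm) • U₁) :
    h • U₁ - Δt • (((1 / 2 : ℝ) • (g₁' + g₂) - (lamP / 2) • (U₂ - U₁)) -
        ((1 / 2 : ℝ) • (g₀ + g₁) - (lamM / 2) • (U₁ - U₀))) =
      (h + Δt * (wp - wm) / 2 - Δt * (lamM + lamP) / 2) • U₁ +
        (Δt / 2) • ((lamM • U₀ + g₀) + (lamP • U₂ - g₂)) := by
  subst hg₁
  module

theorem rusanov_first_order_positivity_general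
    (γ β : ℝ) (hγ : 1 < γ) (hβ1 : β < 1)
    (ρ₀ v₀ p₀ ρ₁ v₁ p₁ ρ₂ v₂ p₂ : ℝ)
    (hρ₀ : 0 < ρ₀) (hp₀ : 0 < p₀) (hρ₁ : 0 < ρ₁) (hp₁ : 0 < p₁)
    (hρ₂ : 0 < ρ₂) (hp₂ : 0 < p₂)
    (wm wp : ℝ) (h Δt : ℝ) (hh : 0 < h) (hΔt : 0 < Δt)
    (lamM lamP : ℝ)
    (hlamM : lamM = rusanovSpeed v₀ (soundSpeed γ ρ₀ p₀) v₁ (soundSpeed γ ρ₁ p₁) wm)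
    (hlamP : lamP = rusanovSpeed v₁ (soundSpeed γ ρ₁ p₁) v₂ (soundSpeed γ ρ₂ p₂) wp)
    (cfl₁ : Δt ≤ (1 - β / 2) * h / ((lamM + lamP) / 2))
    (cfl₂ : Δt * |wp - wm| ≤ β * h)
    (h' : ℝ) (hh' : h' = h + Δt * (wp - wm))
    (U' : ℝ × ℝ × ℝ)
    (hU' : U' = (1 / h') •
      (h • consU γ ρ₁ v₁ p₁ -
        Δt • (rusanovFlux γ ρ₁ v₁ p₁ ρ₂ v₂ p₂ wp - rusanovFlux γ ρ₀ v₀ p₀ ρ₁ v₁ p₁ wm))) :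
    0 < h' ∧ 0 < U'.1 ∧ 0 < pressureOf γ U' := by
  have hlamM₀ : |v₀ - wm| + soundSpeed γ ρ₀ p₀ ≤ lamM := hlamM ▸ le_max_left _ _
  have hlamP₂ : |v₂ - wp| + soundSpeed γ ρ₂ p₂ ≤ lamP := hlamP ▸ le_max_right _ _
  have hlam : 0 < (lamM + lamP) / 2 := by
    linarith [abs_nonneg (v₀ - wm), abs_nonneg (v₂ - wp), soundSpeed_pos hγ hρ₀ hp₀,
      soundSpeed_pos hγ hρ₂ hp₂]
  have hcfl₁ := (le_div_iff₀ hlam).mp cfl₁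
  have hw : -(β * h) ≤ Δt * (wp - wm) := by
    have := neg_abs_le (wp - wm)
    nlinarith
  have hh'₀ : 0 < h' := by nlinarith
  have hα : 0 ≤ h + Δt * (wp - wm) / 2 - Δt * (lamM + lamP) / 2 := by linarith
  have hU'mem : U' ∈ admissibleCone := by
    rw [hU', rusanovFlux, rusanovFlux, ← hlamM, ← hlamP,
      conservative_update_eq _ _ _ _ _ _ _ _ _ _ _ _ _ (aleFlux_sub_aleFlux wm wp)]
    refine admissibleCone.smul_mem (one_div_pos.mpr hh'₀)
      (smul_add_mem_admissibleCone hα (consU_mem_admissibleCone hγ hρ₁ hp₁)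
        (admissibleCone.smul_mem (half_pos hΔt) (admissibleCone.add_mem ?_ ?_)))
    · exact smul_consU_add_aleFlux_mem_admissibleCone hγ hρ₀ hp₀ hlamM₀
    · exact smul_consU_sub_aleFlux_mem_admissibleCone hγ hρ₂ hp₂ hlamP₂
  exact ⟨hh'₀, hU'mem.1, mul_pos (sub_pos.mpr hγ) hU'mem.2⟩

/-- Theorem 1 of the paper: positivity of the first-order moving-mesh finite volume
scheme with Rusanov flux under the CFL condition. -/
theorem rusanov_first_order_positivity
    (γ β : ℝ) (hγ : 1 < γ) (hβ0 : 0 < β) (hβ1 : β < 1)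
    (ρ₀ v₀ p₀ ρ₁ v₁ p₁ ρ₂ v₂ p₂ : ℝ)
    (hρ₀ : 0 < ρ₀) (hp₀ : 0 < p₀) (hρ₁ : 0 < ρ₁) (hp₁ : 0 < p₁)
    (hρ₂ : 0 < ρ₂) (hp₂ : 0 < p₂)
    (wm wp : ℝ) (h Δt : ℝ) (hh : 0 < h) (hΔt : 0 < Δt)
    (lamM lamP : ℝ)
    (hlamM : lamM = rusanovSpeed v₀ (soundSpeed γ ρ₀ p₀) v₁ (soundSpeed γ ρ₁ p₁) wm)
    (hlamP : lamP = rusanovSpeed v₁ (soundSpeed γ ρ₁ p₁) v₂ (soundSpeed γ ρ₂ p₂) wp)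
    (cfl₁ : Δt ≤ (1 - β / 2) * h / ((lamM + lamP) / 2))
    (cfl₂ : Δt * |wp - wm| ≤ β * h)
    (h' : ℝ) (hh' : h' = h + Δt * (wp - wm))
    (U' : ℝ × ℝ × ℝ)
    (hU' : U' = (1 / h') •
      (h • consU γ ρ₁ v₁ p₁ -
        Δt • (rusanovFlux γ ρ₁ v₁ p₁ ρ₂ v₂ p₂ wp - rusanovFlux γ ρ₀ v₀ p₀ ρ₁ v₁ p₁ wm))) :
    0 < h' ∧ 0 < U'.1 ∧ 0 < pressureOf γ U' :=
  rusanov_first_order_positivity_general γ β hγ hβ1 ρ₀ v₀ p₀ ρ₁ v₁ p₁ ρ₂ v₂ p₂ hρ₀ hp₀ hρ₁ hp₁ hρ₂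
    hp₂ wm wp h Δt hh hΔt lamM lamP hlamM hlamP cfl₁ cfl₂ h' hh' U' hU'
end
end

section
/- Exact resolution of a moving contact discontinuity by the ALE HLLC flux: fix γ > 1 and let the left and right primitive states be (ρ_l, v, p) and (ρ_r, v, p) with ρ_l > 0, ρ_r > 0, p > 0 (equal velocities and pressures, arbitrary positive densities), and take the mesh velocity w = v. Then the ALE HLLC numerical flux ĝ(U_l, U_r, w) equals (0, p, vp), which coincides with the exact ALE flux F(U_l) − wU_l = F(U_r) − wU_r of both states; in particular the numerical flux introduces no dissipation across the contact. -/
noncomputable section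

open scoped Classical

/-- The ALE HLLC numerical flux of the left primitive state `(ρl, vl, pl)` and
right primitive state `(ρr, vr, pr)` with mesh velocity `w`, using the
Roe-average based signal speeds `S_l, S_r`. -/
def hllcFlux (γ ρl vl pl ρr vr pr w : ℝ) : ℝ × ℝ × ℝ :=
  let cl := soundSpeed γ ρl pl
  let cr := soundSpeed γ ρr pr
  let El := pl / (γ - 1) + ρl * vl ^ 2 / 2
  let Er := pr / (γ - 1) + ρr * vr ^ 2 / 2
  let Hl := (El + pl) / ρl
  let Hr := (Er + pr) / ρr
  let vhat := (Real.sqrt ρl * vl + Real.sqrt ρr * vr) / (Real.sqrt ρl + Real.sqrt ρr)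
  let Hhat := (Real.sqrt ρl * Hl + Real.sqrt ρr * Hr) / (Real.sqrt ρl + Real.sqrt ρr)
  let chat := Real.sqrt ((γ - 1) * (Hhat - vhat ^ 2 / 2))
  let vtl := vl - w
  let vtr := vr - w
  let Sl := min (vtl - cl) (vhat - w - chat)
  let Sr := max (vtr + cr) (vhat - w + chat)
  let SM := (ρr * vtr * (Sr - vtr) - ρl * vtl * (Sl - vtl) + pl - pr) /
      (ρr * (Sr - vtr) - ρl * (Sl - vtl))
  let pstar := ρl * (vtl - Sl) * (vtl - SM) + pl
  let Ulstar : ℝ × ℝ × ℝ := (1 / (Sl - SM)) •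
      ((Sl - vtl) * ρl, (Sl - vtl) * (ρl * vl) + pstar - pl,
        (Sl - vtl) * El - pl * vtl + pstar * SM)
  let Urstar : ℝ × ℝ × ℝ := (1 / (Sr - SM)) •
      ((Sr - vtr) * ρr, (Sr - vtr) * (ρr * vr) + pstar - pr,
        (Sr - vtr) * Er - pr * vtr + pstar * SM)
  let gstar : ℝ × ℝ × ℝ → ℝ × ℝ × ℝ := fun Us => SM • Us + (0, pstar, (SM + w) * pstar)
  if 0 < Sl then aleFlux γ ρl vl pl w
  else if 0 < SM then gstar Ulstar
  else if 0 ≤ Sr then gstar Urstar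
  else aleFlux γ ρr vr pr w

/-! With mesh velocity `w = v` both relative velocities `ṽ_l, ṽ_r` vanish. Then
`S_l ≤ ṽ_l - c_l ≤ 0 ≤ ṽ_r + c_r ≤ S_r` whatever the Roe averages are, the numerator of `S_M`
vanishes (equal pressures), so `S_M = 0` and `p* = p`. The flux is therefore taken from the right
star state, and `g*(U_r*, v) = 0 • U_r* + (0, p, v p)`. -/

theorem aleFlux_self (γ ρ v p : ℝ) : aleFlux γ ρ v p v = (0, p, v * p) := by
  simp only [aleFlux, eulerFlux, consU, Prod.ext_iff, Prod.fst_sub, Prod.snd_sub, Prod.smul_fst,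
    Prod.smul_snd, smul_eq_mul]
  refine ⟨?_, ?_, ?_⟩ <;> ring

theorem hllcFlux_moving_contact (γ ρl ρr v p : ℝ) : hllcFlux γ ρl v p ρr v p v = (0, p, v * p) := by
  have hSl (x : ℝ) : ¬ 0 < min (-soundSpeed γ ρl p) x :=
    not_lt.2 <| (min_le_left _ _).trans (neg_nonpos.2 (Real.sqrt_nonneg _))
  have hSr (x : ℝ) : 0 ≤ max (soundSpeed γ ρr p) x :=
    (Real.sqrt_nonneg _).trans (le_max_left _ _)
  unfold hllcFlux
  simp only [sub_self, mul_zero, zero_mul, zero_sub, sub_zero, add_zero, zero_add, zero_div]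
  rw [if_neg (hSl _), if_neg (lt_irrefl 0), if_pos (hSr _), zero_smul, zero_add]

theorem hllc_flux_exact_on_moving_contact_general
    (γ ρl ρr v p : ℝ) :
    hllcFlux γ ρl v p ρr v p v = (0, p, v * p) ∧
      aleFlux γ ρl v p v = (0, p, v * p) ∧
      aleFlux γ ρr v p v = (0, p, v * p) :=
  ⟨hllcFlux_moving_contact γ ρl ρr v p, aleFlux_self γ ρl v p, aleFlux_self γ ρr v p⟩

/-- Exact resolution of a moving contact discontinuity by the ALE HLLC flux:
for equal velocities and pressures and mesh velocity `w = v`, the HLLC flux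
equals `(0, p, v p)`, the exact ALE flux of both states. -/
theorem hllc_flux_exact_on_moving_contact
    (γ ρl ρr v p : ℝ) (hγ : 1 < γ) (hρl : 0 < ρl) (hρr : 0 < ρr) (hp : 0 < p) :
    hllcFlux γ ρl v p ρr v p v = (0, p, v * p) ∧
      aleFlux γ ρl v p v = (0, p, v * p) ∧
      aleFlux γ ρr v p v = (0, p, v * p) :=
  hllc_flux_exact_on_moving_contact_general γ ρl ρr v p
end
end
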